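/- arXiv:2110.01670 — 6 statements merged into one kernel-verified Lean document; each statement's English description precedes it below -/
import Mathlib

section
/- Let (X, ρ) be a metric space, d ≥ 0, q ≥ 1, and let ν be a positive Borel measure on X satisfying ν(B(x,r)) ≤ c·(r + d)^q for all x ∈ X and r > 0 (a d-regular measure with regularity constant c). Let S > q, N ≥ 1, and suppose Φ_N : X × X → ℝ satisfies |Φ_N(x,y)| ≤ A·N^q / max(1, (N·ρ(x,y))^S) for all x, y. Then for every x ∈ X and every r ≥ 1/N, ∫_{X \ B(x,r)} |Φ_N(x,y)| dν(y) ≤ C·A·c·(N r)^{q−S}·(1 + d/r)^q, where C depends only on q and S. -/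
open MeasureTheory Metric

/-- Dyadic annulus estimate: for a `d`-regular measure and a localized kernel, the integral of
`|Φ_N(x,·)|` outside `B(x,r)` is bounded by `C·A·c·(Nr)^{q-S}·(1+d/r)^q`. -/
theorem stmt1 (q S : ℝ) (hq : 0 < q) (hqS : q < S) :
    ∃ C : ℝ, 0 < C ∧
      ∀ (X : Type) [MetricSpace X] [MeasurableSpace X]
        (ν : Measure X) (d c : ℝ), 0 ≤ d → 0 < c →
        (∀ (x : X) (r : ℝ), 0 < r → ν (closedBall x r) ≤ ENNReal.ofReal (c * (r + d) ^ q)) →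
        ∀ (N A : ℝ), 1 ≤ N → 0 < A →
        ∀ (Φ : X → X → ℝ),
        (∀ x y, |Φ x y| ≤ A * N ^ q / max 1 ((N * dist x y) ^ S)) →
        ∀ (x : X) (r : ℝ), 1 / N ≤ r →
        ∫⁻ y in (closedBall x r)ᶜ, ENNReal.ofReal |Φ x y| ∂ν
          ≤ ENNReal.ofReal (C * A * c * (N * r) ^ (q - S) * (1 + d / r) ^ q) := by
  have ht0 : (0:ℝ) < 2 ^ (q - S) := Real.rpow_pos_of_pos two_pos _
  have ht1 : (2:ℝ) ^ (q - S) < 1 :=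
    Real.rpow_lt_one_of_one_lt_of_neg one_lt_two (by linarith)
  set t : ℝ := 2 ^ (q - S) with htdef
  have h2q : (0:ℝ) < 2 ^ q := Real.rpow_pos_of_pos two_pos _
  refine ⟨2 ^ q / (1 - t), div_pos h2q (by linarith), ?_⟩
  intro X _ _ ν d c hd hc hreg N A hN hA Φ hΦ x r hr
  have hN0 : (0:ℝ) < N := one_pos.trans_le hN
  have hr0 : (0:ℝ) < r := lt_of_lt_of_le (by positivity) hr
  have hNr : 1 ≤ N * r := by
    rw [div_le_iff₀ hN0] at hr
    nlinarith
  set b : ℝ := 2 ^ q * A * c * (N * r) ^ (q - S) * (1 + d / r) ^ q with hbdef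
  have hb0 : 0 ≤ b := by
    have h1 : (0:ℝ) < (N * r) ^ (q - S) := Real.rpow_pos_of_pos (by positivity) _
    have h2 : (0:ℝ) < (1 + d / r) ^ q := Real.rpow_pos_of_pos (by positivity) _
    positivity
  set s : ℕ → Set X := fun k => closedBall x (2 ^ (k+1) * r) \ closedBall x (2 ^ k * r) with hs
  have hcover : (closedBall x r)ᶜ ⊆ ⋃ k, s k := by
    intro y hy
    simp only [Set.mem_compl_iff, mem_closedBall, not_le] at hy
    have hP : ∃ n : ℕ, dist y x ≤ 2 ^ n * r := by
      obtain ⟨n, hn⟩ := pow_unbounded_of_one_lt (dist y x / r) one_lt_two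
      exact ⟨n, by rw [div_lt_iff₀ hr0] at hn; nlinarith⟩
    classical
    have hm : dist y x ≤ 2 ^ (Nat.find hP) * r := Nat.find_spec hP
    have hm0 : Nat.find hP ≠ 0 := by
      intro h
      rw [h] at hm
      simp at hm
      linarith
    obtain ⟨k, hk⟩ := Nat.exists_eq_succ_of_ne_zero hm0
    have hklt : ¬ dist y x ≤ 2 ^ k * r := Nat.find_min hP (hk ▸ k.lt_succ_self)
    refine Set.mem_iUnion.mpr ⟨k, ?_, ?_⟩
    · rw [mem_closedBall]; rw [hk] at hm; exact hm
    · rw [mem_closedBall]; exact hklt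
  have hterm : ∀ k : ℕ, ∫⁻ y in s k, ENNReal.ofReal |Φ x y| ∂ν
      ≤ ENNReal.ofReal (b * t ^ k) := by
    intro k
    have hK1 : (1:ℝ) ≤ 2 ^ k := one_le_pow₀ (by norm_num)
    have hK0 : (0:ℝ) < 2 ^ k := by positivity
    have hNKr : (1:ℝ) ≤ N * (2 ^ k * r) := by nlinarith
    have hNKr0 : (0:ℝ) < N * (2 ^ k * r) := by positivity
    have hden : (0:ℝ) < (N * (2 ^ k * r)) ^ S := Real.rpow_pos_of_pos hNKr0 _
    have hb : ∀ y ∈ s k,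
        ENNReal.ofReal |Φ x y| ≤ ENNReal.ofReal (A * N ^ q / (N * (2 ^ k * r)) ^ S) := by
      intro y hy
      apply ENNReal.ofReal_le_ofReal
      refine (hΦ x y).trans ?_
      have hdy : 2 ^ k * r < dist x y := by
        have := hy.2
        rw [mem_closedBall] at this
        push_neg at this
        rwa [dist_comm]
      have hmax : (N * (2 ^ k * r)) ^ S ≤ max 1 ((N * dist x y) ^ S) := by
        refine le_trans ?_ (le_max_right _ _)
        exact Real.rpow_le_rpow hNKr0.le (by nlinarith) (by linarith)
      exact div_le_div_of_nonneg_left (by positivity) hden hmax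
    have hreal : (A * N ^ q / (N * (2 ^ k * r)) ^ S) * (c * (2 ^ (k+1) * r + d) ^ q)
        ≤ b * t ^ k := by
      have hstep : (2:ℝ) ^ (k+1) * r + d ≤ 2 * 2 ^ k * (r + d) := by
        rw [pow_succ]
        nlinarith
      have hstep2 : ((2:ℝ) ^ (k+1) * r + d) ^ q ≤ (2 * 2 ^ k * (r + d)) ^ q :=
        Real.rpow_le_rpow (by positivity) hstep hq.le
      have hLHS : (A * N ^ q / (N * (2 ^ k * r)) ^ S) * (c * (2 ^ (k+1) * r + d) ^ q)
          ≤ (A * N ^ q / (N * (2 ^ k * r)) ^ S) * (c * (2 * 2 ^ k * (r + d)) ^ q) := by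
        gcongr
      refine hLHS.trans (le_of_eq ?_)
      -- now pure rpow algebra
      have hKrpow : ((2:ℝ) ^ k : ℝ) = (2:ℝ) ^ (k:ℝ) := (Real.rpow_natCast 2 k).symm
      have hrd : r + d = r * (1 + d / r) := by field_simp
      have e1 : (N * (2 ^ k * r)) ^ S = N ^ S * ((2:ℝ) ^ ((k:ℝ) * S) * r ^ S) := by
        rw [Real.mul_rpow hN0.le (by positivity), Real.mul_rpow hK0.le hr0.le, hKrpow,
          ← Real.rpow_mul (by norm_num : (0:ℝ) ≤ 2)]
      have e2 : ((2:ℝ) * 2 ^ k * (r + d)) ^ q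
          = 2 ^ q * (2:ℝ) ^ ((k:ℝ) * q) * (r ^ q * (1 + d / r) ^ q) := by
        rw [hrd, Real.mul_rpow (by positivity) (by positivity),
          Real.mul_rpow (by norm_num) hK0.le, Real.mul_rpow hr0.le (by positivity),
          hKrpow, ← Real.rpow_mul (by norm_num : (0:ℝ) ≤ 2)]
      have e3 : (N * r) ^ (q - S) = N ^ q / N ^ S * (r ^ q / r ^ S) := by
        rw [Real.mul_rpow hN0.le hr0.le, Real.rpow_sub hN0, Real.rpow_sub hr0]
      have e4 : t ^ k = (2:ℝ) ^ ((k:ℝ) * q) / (2:ℝ) ^ ((k:ℝ) * S) := by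
        rw [htdef, ← Real.rpow_natCast ((2:ℝ) ^ (q - S)) k,
          ← Real.rpow_mul (by norm_num : (0:ℝ) ≤ 2), sub_mul,
          Real.rpow_sub two_pos, mul_comm (q : ℝ) (k:ℝ), mul_comm (S : ℝ) (k:ℝ)]
      rw [hbdef, e1, e2, e3, e4]
      have hNS : (0:ℝ) < N ^ S := Real.rpow_pos_of_pos hN0 _
      have hrS : (0:ℝ) < r ^ S := Real.rpow_pos_of_pos hr0 _
      have h2kS : (0:ℝ) < (2:ℝ) ^ ((k:ℝ) * S) := Real.rpow_pos_of_pos two_pos _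
      field_simp
    calc ∫⁻ y in s k, ENNReal.ofReal |Φ x y| ∂ν
        ≤ ∫⁻ _ in s k, ENNReal.ofReal (A * N ^ q / (N * (2 ^ k * r)) ^ S) ∂ν := by
          exact setLIntegral_mono measurable_const hb
      _ = ENNReal.ofReal (A * N ^ q / (N * (2 ^ k * r)) ^ S) * ν (s k) :=
          setLIntegral_const _ _
      _ ≤ ENNReal.ofReal (A * N ^ q / (N * (2 ^ k * r)) ^ S)
            * ENNReal.ofReal (c * (2 ^ (k+1) * r + d) ^ q) := by
          gcongr
          exact (measure_mono Set.diff_subset).trans (hreg x _ (by positivity))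
      _ = ENNReal.ofReal ((A * N ^ q / (N * (2 ^ k * r)) ^ S) * (c * (2 ^ (k+1) * r + d) ^ q)) :=
          (ENNReal.ofReal_mul (by positivity)).symm
      _ ≤ ENNReal.ofReal (b * t ^ k) := ENNReal.ofReal_le_ofReal hreal
  have hsum : Summable (fun k : ℕ => b * t ^ k) :=
    (summable_geometric_of_lt_one ht0.le ht1).mul_left _
  calc ∫⁻ y in (closedBall x r)ᶜ, ENNReal.ofReal |Φ x y| ∂ν
      ≤ ∫⁻ y in ⋃ k, s k, ENNReal.ofReal |Φ x y| ∂ν := lintegral_mono_set hcover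
    _ ≤ ∑' k, ∫⁻ y in s k, ENNReal.ofReal |Φ x y| ∂ν := lintegral_iUnion_le _ _
    _ ≤ ∑' k, ENNReal.ofReal (b * t ^ k) := ENNReal.tsum_le_tsum hterm
    _ = ENNReal.ofReal (∑' k, b * t ^ k) :=
        (ENNReal.ofReal_tsum_of_nonneg (fun k => by positivity) hsum).symm
    _ = ENNReal.ofReal (b * (1 - t)⁻¹) := by
        rw [tsum_mul_left, tsum_geometric_of_lt_one ht0.le ht1]
    _ = ENNReal.ofReal (2 ^ q / (1 - t) * A * c * (N * r) ^ (q - S) * (1 + d / r) ^ q) := by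
        rw [hbdef]
        congr 1
        field_simp
end

section
/- Under the hypotheses of the previous annulus estimate (ν a d-regular positive measure with constant c, and Φ_N a kernel satisfying |Φ_N(x,y)| ≤ A·N^q / max(1,(N ρ(x,y))^S) with S > q, N ≥ 1), one has the global Lebesgue-type bound sup_{x ∈ X} ∫_X |Φ_N(x,y)| dν(y) ≤ C·A·c·(1 + N d)^q, where C depends only on q and S. -/
open MeasureTheory Metric

/-- Key real arithmetic inequality for the annulus terms. -/
lemma stmt2_aux (q S : ℝ) (hq : 0 < q) (hqS : q < S) (N d c A : ℝ) (hN : 1 ≤ N)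
    (hd : 0 ≤ d) (hc : 0 < c) (hA : 0 < A) (m : ℕ) :
    A * N ^ q / ((2:ℝ) ^ m) ^ S * (c * ((2:ℝ) ^ (m + 1) / N + d) ^ q) ≤
      A * c * (1 + N * d) ^ q * ((2:ℝ) ^ q * ((2:ℝ) ^ (q - S)) ^ m) := by
  have hN0 : (0:ℝ) < N := lt_of_lt_of_le one_pos hN
  have h2m : (0:ℝ) < (2:ℝ) ^ m := by positivity
  have h2m1 : (0:ℝ) < (2:ℝ) ^ (m + 1) := by positivity
  have hbase : (0:ℝ) ≤ (2:ℝ) ^ (m + 1) / N + d := by positivity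
  -- step 1 : radius bound
  have h1 : (2:ℝ) ^ (m + 1) / N + d ≤ (2:ℝ) ^ (m + 1) * (1 / N + d) := by
    have h2 : (1:ℝ) ≤ (2:ℝ) ^ (m + 1) := one_le_pow₀ (by norm_num)
    have : d ≤ (2:ℝ) ^ (m + 1) * d := le_mul_of_one_le_left hd h2
    rw [mul_add]
    rw [mul_one_div]
    linarith
  have h1q : ((2:ℝ) ^ (m + 1) / N + d) ^ q ≤ ((2:ℝ) ^ (m + 1)) ^ q * (1 / N + d) ^ q := by
    rw [← Real.mul_rpow h2m1.le (by positivity)]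
    exact Real.rpow_le_rpow hbase h1 hq.le
  -- step 2 : N ^ q * (1/N + d) ^ q = (1 + N d) ^ q
  have h2 : N ^ q * (1 / N + d) ^ q = (1 + N * d) ^ q := by
    rw [← Real.mul_rpow hN0.le (by positivity)]
    congr 1
    field_simp
  -- step 3 : power identity
  have h3 : ((2:ℝ) ^ (m + 1)) ^ q / ((2:ℝ) ^ m) ^ S = (2:ℝ) ^ q * ((2:ℝ) ^ (q - S)) ^ m := by
    rw [← Real.rpow_natCast (2:ℝ) (m + 1), ← Real.rpow_natCast (2:ℝ) m,
      ← Real.rpow_natCast ((2:ℝ) ^ (q - S)) m,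
      ← Real.rpow_mul (by norm_num : (0:ℝ) ≤ 2), ← Real.rpow_mul (by norm_num : (0:ℝ) ≤ 2),
      ← Real.rpow_mul (by norm_num : (0:ℝ) ≤ 2),
      ← Real.rpow_sub (by norm_num : (0:ℝ) < 2), ← Real.rpow_add (by norm_num : (0:ℝ) < 2)]
    congr 1
    push_cast
    ring
  calc A * N ^ q / ((2:ℝ) ^ m) ^ S * (c * ((2:ℝ) ^ (m + 1) / N + d) ^ q)
      ≤ A * N ^ q / ((2:ℝ) ^ m) ^ S * (c * (((2:ℝ) ^ (m + 1)) ^ q * (1 / N + d) ^ q)) := by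
        apply mul_le_mul_of_nonneg_left (mul_le_mul_of_nonneg_left h1q hc.le)
        positivity
    _ = A * c * (N ^ q * (1 / N + d) ^ q) * (((2:ℝ) ^ (m + 1)) ^ q / ((2:ℝ) ^ m) ^ S) := by
        ring
    _ = A * c * (1 + N * d) ^ q * ((2:ℝ) ^ q * ((2:ℝ) ^ (q - S)) ^ m) := by
        rw [h2, h3]

/-- Global Lebesgue-type bound: for a `d`-regular measure and a localized kernel,
`sup_x ∫ |Φ_N(x,y)| dν(y) ≤ C·A·c·(1+Nd)^q`. -/
theorem stmt2 (q S : ℝ) (hq : 0 < q) (hqS : q < S) :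
    ∃ C : ℝ, 0 < C ∧
      ∀ (X : Type) [MetricSpace X] [MeasurableSpace X]
        (ν : Measure X) (d c : ℝ), 0 ≤ d → 0 < c →
        (∀ (x : X) (r : ℝ), 0 < r → ν (closedBall x r) ≤ ENNReal.ofReal (c * (r + d) ^ q)) →
        ∀ (N A : ℝ), 1 ≤ N → 0 < A →
        ∀ (Φ : X → X → ℝ),
        (∀ x y, |Φ x y| ≤ A * N ^ q / max 1 ((N * dist x y) ^ S)) →
        ∀ x : X,
        ∫⁻ y, ENNReal.ofReal |Φ x y| ∂ν ≤ ENNReal.ofReal (C * A * c * (1 + N * d) ^ q) := by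
  have hr0 : (0:ℝ) < (2:ℝ) ^ (q - S) := Real.rpow_pos_of_pos two_pos _
  have hr1 : (2:ℝ) ^ (q - S) < 1 :=
    Real.rpow_lt_one_of_one_lt_of_neg one_lt_two (by linarith)
  set r : ℝ := (2:ℝ) ^ (q - S) with hrdef
  have hr1' : (0:ℝ) < 1 - r := by linarith
  refine ⟨1 + (2:ℝ) ^ q * (1 - r)⁻¹, by positivity, ?_⟩
  intro X _ _ ν d c hd hc hν N A hN hA Φ hΦ x
  have hN0 : (0:ℝ) < N := lt_of_lt_of_le one_pos hN
  -- the dominating kernel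
  set h : X → ENNReal := fun y => ENNReal.ofReal (A * N ^ q / max 1 ((N * dist x y) ^ S)) with hh
  have hgh : ∀ y, ENNReal.ofReal |Φ x y| ≤ h y := fun y =>
    ENNReal.ofReal_le_ofReal (hΦ x y)
  -- the annuli
  set s : ℕ → Set X := fun k =>
    Nat.casesOn k (closedBall x (1 / N))
      (fun m => closedBall x ((2:ℝ) ^ (m + 1) / N) \ closedBall x ((2:ℝ) ^ m / N)) with hs
  have hcover : (⋃ k, s k) = Set.univ := by
    ext y
    simp only [Set.mem_iUnion, Set.mem_univ, iff_true]
    rcases le_or_gt (dist x y) (1 / N) with hy | hy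
    · exact ⟨0, by simpa [hs, dist_comm] using hy⟩
    · have hy0 : (1:ℝ) < N * dist x y := by
        have h1 := mul_lt_mul_of_pos_left hy hN0
        rwa [mul_one_div, div_self hN0.ne'] at h1
      have hex : ∃ k : ℕ, N * dist x y ≤ 2 ^ k := by
        obtain ⟨k, hk⟩ := pow_unbounded_of_one_lt (N * dist x y) (one_lt_two (α := ℝ))
        exact ⟨k, hk.le⟩
      classical
      let k := Nat.find hex
      have hk : N * dist x y ≤ 2 ^ k := Nat.find_spec hex
      have hkpos : k ≠ 0 := by
        intro h0
        have := hk
        rw [h0] at this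
        simp at this
        linarith
      obtain ⟨m, hm⟩ := Nat.exists_eq_succ_of_ne_zero hkpos
      have hmlt : ¬ (N * dist x y ≤ 2 ^ m) := Nat.find_min hex (by omega)
      push_neg at hmlt
      refine ⟨m + 1, ?_⟩
      simp only [hs, Set.mem_diff, mem_closedBall, not_le, dist_comm y x]
      constructor
      · rw [le_div_iff₀ hN0]
        rw [hm, mul_comm, Nat.succ_eq_add_one] at hk
        exact hk
      · rw [div_lt_iff₀ hN0]
        rw [mul_comm] at hmlt
        linarith [hmlt]
  -- split the integral
  have hsplit : ∫⁻ y, ENNReal.ofReal |Φ x y| ∂ν ≤ ∑' k, ∫⁻ y in s k, h y ∂ν := by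
    calc ∫⁻ y, ENNReal.ofReal |Φ x y| ∂ν ≤ ∫⁻ y, h y ∂ν := lintegral_mono hgh
      _ = ∫⁻ y in Set.univ, h y ∂ν := (setLIntegral_univ _).symm
      _ = ∫⁻ y in ⋃ k, s k, h y ∂ν := by rw [hcover]
      _ ≤ ∑' k, ∫⁻ y in s k, h y ∂ν := lintegral_iUnion_le _ _
  -- bound on the central ball
  have hpiece0 : ∫⁻ y in s 0, h y ∂ν ≤ ENNReal.ofReal (A * c * (1 + N * d) ^ q) := by
    have hb : ∀ y : X, h y ≤ ENNReal.ofReal (A * N ^ q) := by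
      intro y
      apply ENNReal.ofReal_le_ofReal
      apply div_le_of_le_mul₀ (by positivity) (by positivity)
      exact le_mul_of_one_le_right (by positivity) (le_max_left _ _)
    calc ∫⁻ y in s 0, h y ∂ν ≤ ∫⁻ _ in s 0, ENNReal.ofReal (A * N ^ q) ∂ν :=
          lintegral_mono hb
      _ = ENNReal.ofReal (A * N ^ q) * ν (s 0) := by
          rw [lintegral_const, Measure.restrict_apply_univ]
      _ ≤ ENNReal.ofReal (A * N ^ q) * ENNReal.ofReal (c * (1 / N + d) ^ q) := by
          apply mul_le_mul_right (hν x (1 / N) (by positivity))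
      _ = ENNReal.ofReal (A * N ^ q * (c * (1 / N + d) ^ q)) := by
          rw [← ENNReal.ofReal_mul (by positivity)]
      _ = ENNReal.ofReal (A * c * (1 + N * d) ^ q) := by
          congr 1
          have h2 : N ^ q * (1 / N + d) ^ q = (1 + N * d) ^ q := by
            rw [← Real.mul_rpow hN0.le (by positivity)]
            congr 1
            field_simp
          calc A * N ^ q * (c * (1 / N + d) ^ q)
              = A * c * (N ^ q * (1 / N + d) ^ q) := by ring
            _ = A * c * (1 + N * d) ^ q := by rw [h2]
  -- bound on the annuli
  have hpiece : ∀ m : ℕ, ∫⁻ y in s (m + 1), h y ∂ν ≤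
      ENNReal.ofReal (A * c * (1 + N * d) ^ q * ((2:ℝ) ^ q * r ^ m)) := by
    intro m
    have h2m : (0:ℝ) < (2:ℝ) ^ m := by positivity
    have hbm : ∀ y ∈ s (m + 1), h y ≤
        ENNReal.ofReal (A * N ^ q / ((2:ℝ) ^ m) ^ S) := by
      intro y hy
      simp only [hs, Set.mem_diff, mem_closedBall, not_le] at hy
      have hyd : (2:ℝ) ^ m / N < dist x y := by
        rw [dist_comm]; exact hy.2
      have hNd : (2:ℝ) ^ m < N * dist x y := by
        rw [div_lt_iff₀ hN0] at hyd
        linarith [hyd]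
      have h1le : (1:ℝ) ≤ (2:ℝ) ^ m := one_le_pow₀ (by norm_num)
      have hmax : max 1 ((N * dist x y) ^ S) = (N * dist x y) ^ S := by
        apply max_eq_right
        calc (1:ℝ) = 1 ^ S := (Real.one_rpow S).symm
          _ ≤ (N * dist x y) ^ S :=
            Real.rpow_le_rpow (by norm_num) (by linarith) (by linarith)
      apply ENNReal.ofReal_le_ofReal
      rw [hmax]
      apply div_le_div_of_nonneg_left (by positivity) (by positivity)
      exact Real.rpow_le_rpow h2m.le hNd.le (by linarith)
    calc ∫⁻ y in s (m + 1), h y ∂ν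
        ≤ ∫⁻ _ in s (m + 1), ENNReal.ofReal (A * N ^ q / ((2:ℝ) ^ m) ^ S) ∂ν :=
          setLIntegral_mono measurable_const hbm
      _ = ENNReal.ofReal (A * N ^ q / ((2:ℝ) ^ m) ^ S) * ν (s (m + 1)) := by
          rw [lintegral_const, Measure.restrict_apply_univ]
      _ ≤ ENNReal.ofReal (A * N ^ q / ((2:ℝ) ^ m) ^ S) *
            ENNReal.ofReal (c * ((2:ℝ) ^ (m + 1) / N + d) ^ q) := by
          apply mul_le_mul_right
          refine le_trans (measure_mono ?_) (hν x ((2:ℝ) ^ (m + 1) / N) (by positivity))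
          exact Set.diff_subset
      _ = ENNReal.ofReal (A * N ^ q / ((2:ℝ) ^ m) ^ S *
            (c * ((2:ℝ) ^ (m + 1) / N + d) ^ q)) := by
          rw [← ENNReal.ofReal_mul (by positivity)]
      _ ≤ ENNReal.ofReal (A * c * (1 + N * d) ^ q * ((2:ℝ) ^ q * r ^ m)) :=
          ENNReal.ofReal_le_ofReal (stmt2_aux q S hq hqS N d c A hN hd hc hA m)
  -- sum everything
  refine hsplit.trans ?_
  rw [tsum_eq_zero_add' ENNReal.summable]
  have hsum : ∑' m : ℕ, ∫⁻ y in s (m + 1), h y ∂ν ≤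
      ENNReal.ofReal (A * c * (1 + N * d) ^ q * ((2:ℝ) ^ q * (1 - r)⁻¹)) := by
    calc ∑' m : ℕ, ∫⁻ y in s (m + 1), h y ∂ν
        ≤ ∑' m : ℕ, ENNReal.ofReal (A * c * (1 + N * d) ^ q * ((2:ℝ) ^ q * r ^ m)) :=
          ENNReal.tsum_le_tsum hpiece
      _ = ∑' m : ℕ, ENNReal.ofReal (A * c * (1 + N * d) ^ q * (2:ℝ) ^ q) *
            ENNReal.ofReal (r ^ m) := by
          congr 1
          ext m
          rw [← ENNReal.ofReal_mul (by positivity)]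
          congr 1
          ring
      _ = ENNReal.ofReal (A * c * (1 + N * d) ^ q * (2:ℝ) ^ q) *
            ∑' m : ℕ, ENNReal.ofReal (r ^ m) := ENNReal.tsum_mul_left
      _ = ENNReal.ofReal (A * c * (1 + N * d) ^ q * (2:ℝ) ^ q) *
            ENNReal.ofReal ((1 - r)⁻¹) := by
          congr 1
          rw [← ENNReal.ofReal_tsum_of_nonneg (fun m => by positivity)
            (summable_geometric_of_lt_one hr0.le hr1)]
          congr 1
          exact tsum_geometric_of_lt_one hr0.le hr1
      _ = ENNReal.ofReal (A * c * (1 + N * d) ^ q * ((2:ℝ) ^ q * (1 - r)⁻¹)) := by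
          rw [← ENNReal.ofReal_mul (by positivity)]
          congr 1
          ring
  calc (∫⁻ y in s 0, h y ∂ν) + ∑' m : ℕ, ∫⁻ y in s (m + 1), h y ∂ν
      ≤ ENNReal.ofReal (A * c * (1 + N * d) ^ q) +
          ENNReal.ofReal (A * c * (1 + N * d) ^ q * ((2:ℝ) ^ q * (1 - r)⁻¹)) :=
        add_le_add hpiece0 hsum
    _ = ENNReal.ofReal (A * c * (1 + N * d) ^ q +
          A * c * (1 + N * d) ^ q * ((2:ℝ) ^ q * (1 - r)⁻¹)) := by
        rw [← ENNReal.ofReal_add (by positivity) (by positivity)]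
    _ = ENNReal.ofReal ((1 + (2:ℝ) ^ q * (1 - r)⁻¹) * A * c * (1 + N * d) ^ q) := by
        congr 1
        ring
end

section
/- Let (X, ρ, μ*) be a metric measure space with μ*(B(x,r)) ≤ c₁ r^q for all x, r (so μ* is 0-regular). Let S > q, N ≥ 1, and Φ_N satisfy |Φ_N(x,y)| ≤ A N^q / max(1,(N ρ(x,y))^S). Then for every bounded measurable g : X → ℝ, sup_{x ∈ X} ∫_X |Φ_N(x,y)| |g(y)| dμ*(y) ≤ C·A·c₁·‖g‖_∞, with C depending only on q and S. -/
/-!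
Cover `X` by the dyadic balls `B(x, 2^k/N)`, `k ≥ 0`, and charge each `y` to the first ball
containing it. Outside `B(x, 2^(k-1)/N)` the kernel is at most `2^S · A N^q · 2^(-kS)`, while
`B(x, 2^k/N)` has measure at most `c₁ 2^(kq) N^(-q)`, so the `k`-th term is
`2^S A c₁ ‖g‖_∞ · 2^((q-S)k)`: the powers of `N` cancel and the terms form a geometric series
of ratio `2^(q-S) < 1`, summing to `C = 2^S / (1 - 2^(q-S))`.
-/

open MeasureTheory Metric
open scoped ENNReal

lemma exists_le_two_pow_and_inv_max_one_rpow_le {S : ℝ} (hS : 0 ≤ S) (t : ℝ) :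
    ∃ k : ℕ, t ≤ 2 ^ k ∧ (max 1 (t ^ S))⁻¹ ≤ 2 ^ S * ((2 : ℝ) ^ S)⁻¹ ^ k := by
  classical
  have hex : ∃ k : ℕ, t ≤ 2 ^ k := (pow_unbounded_of_one_lt t one_lt_two).imp fun _ h => h.le
  refine ⟨Nat.find hex, Nat.find_spec hex, ?_⟩
  rcases hk : Nat.find hex with _ | j
  · calc (max 1 (t ^ S))⁻¹ ≤ 1 := inv_le_one_of_one_le₀ (le_max_left _ _)
      _ ≤ 2 ^ S * ((2 : ℝ) ^ S)⁻¹ ^ 0 := by simpa using Real.one_le_rpow one_le_two hS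
  · have hj : 2 ^ j < t := lt_of_not_ge (Nat.find_min hex (hk ▸ j.lt_succ_self))
    calc (max 1 (t ^ S))⁻¹ ≤ (((2 : ℝ) ^ S) ^ j)⁻¹ := by
          refine inv_anti₀ (by positivity) ((le_max_right _ _).trans' ?_)
          rw [Real.rpow_pow_comm zero_le_two]
          exact Real.rpow_le_rpow (by positivity) hj.le hS
      _ = 2 ^ S * ((2 : ℝ) ^ S)⁻¹ ^ (j + 1) := by
          rw [inv_pow, pow_succ]
          field_simp

lemma lintegral_le_tsum_mul_measure_of_forall_exists_mem {X : Type*} [MeasurableSpace X]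
    (μ : Measure X) {f : X → ℝ≥0∞} {s : ℕ → Set X} {c : ℕ → ℝ≥0∞}
    (h : ∀ y, ∃ k, y ∈ s k ∧ f y ≤ c k) :
    ∫⁻ y, f y ∂μ ≤ ∑' k, c k * μ (s k) := by
  have hmeas k : MeasurableSet (toMeasurable μ (s k)) := measurableSet_toMeasurable μ (s k)
  calc ∫⁻ y, f y ∂μ ≤ ∫⁻ y, ∑' k, (toMeasurable μ (s k)).indicator (fun _ => c k) y ∂μ := by
        refine lintegral_mono fun y => ?_
        obtain ⟨k, hy, hfy⟩ := h y
        calc f y ≤ (toMeasurable μ (s k)).indicator (fun _ => c k) y := by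
              rwa [Set.indicator_of_mem (subset_toMeasurable μ _ hy)]
          _ ≤ _ := ENNReal.le_tsum k
    _ = ∑' k, c k * μ (s k) := by
        rw [lintegral_tsum fun k => (measurable_const.indicator (hmeas k)).aemeasurable]
        simp_rw [lintegral_indicator_const (hmeas _), measure_toMeasurable]

lemma rpow_mul_inv_two_rpow_pow_mul_div_rpow {N : ℝ} (hN : 0 < N) (q S : ℝ) (k : ℕ) :
    N ^ q * ((2 : ℝ) ^ S)⁻¹ ^ k * ((2 : ℝ) ^ k / N) ^ q = ((2 : ℝ) ^ (q - S)) ^ k := by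
  rw [Real.div_rpow (by positivity) hN.le, ← Real.rpow_pow_comm zero_le_two,
    Real.rpow_sub two_pos]
  have : (0 : ℝ) < N ^ q := by positivity
  field_simp
  rw [← mul_pow]
  ring

lemma lintegral_ofReal_le_of_le_localized_kernel {X : Type*} [PseudoMetricSpace X]
    [MeasurableSpace X] {μ : Measure X} {q S c₁ N B : ℝ} {x : X} (hS : 0 ≤ S) (hqS : q < S)
    (hc₁ : 0 ≤ c₁) (hμ : ∀ r, 0 < r → μ (closedBall x r) ≤ ENNReal.ofReal (c₁ * r ^ q))
    (hN : 0 < N) (hB : 0 ≤ B) {f : X → ℝ}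
    (hf : ∀ y, f y ≤ B * N ^ q / max 1 ((N * dist x y) ^ S)) :
    ∫⁻ y, ENNReal.ofReal (f y) ∂μ ≤ ENNReal.ofReal (2 ^ S * (1 - 2 ^ (q - S))⁻¹ * B * c₁) := by
  have hρ0 : (0 : ℝ) ≤ 2 ^ (q - S) := by positivity
  have hρ1 : (2 : ℝ) ^ (q - S) < 1 := Real.rpow_lt_one_of_one_lt_of_neg one_lt_two (by linarith)
  have hcover (y : X) : ∃ k : ℕ, y ∈ closedBall x (2 ^ k / N) ∧
      ENNReal.ofReal (f y) ≤ ENNReal.ofReal (B * N ^ q * 2 ^ S * ((2 : ℝ) ^ S)⁻¹ ^ k) := by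
    obtain ⟨k, hk, hkernel⟩ := exists_le_two_pow_and_inv_max_one_rpow_le hS (N * dist x y)
    refine ⟨k, ?_, ENNReal.ofReal_le_ofReal ?_⟩
    · rw [mem_closedBall, dist_comm, le_div_iff₀ hN, mul_comm]
      exact hk
    · calc f y ≤ B * N ^ q * (max 1 ((N * dist x y) ^ S))⁻¹ := hf y
        _ ≤ B * N ^ q * (2 ^ S * ((2 : ℝ) ^ S)⁻¹ ^ k) := by gcongr
        _ = B * N ^ q * 2 ^ S * ((2 : ℝ) ^ S)⁻¹ ^ k := by ring
  have hterm (k : ℕ) : ENNReal.ofReal (B * N ^ q * 2 ^ S * ((2 : ℝ) ^ S)⁻¹ ^ k) *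
      μ (closedBall x (2 ^ k / N)) ≤ ENNReal.ofReal (2 ^ S * B * c₁ * (2 ^ (q - S)) ^ k) :=
    calc _ ≤ ENNReal.ofReal (B * N ^ q * 2 ^ S * ((2 : ℝ) ^ S)⁻¹ ^ k) *
          ENNReal.ofReal (c₁ * (2 ^ k / N) ^ q) := by
          gcongr
          exact hμ _ (by positivity)
      _ = ENNReal.ofReal (2 ^ S * B * c₁ * (2 ^ (q - S)) ^ k) := by
          rw [← ENNReal.ofReal_mul (by positivity),
            ← rpow_mul_inv_two_rpow_pow_mul_div_rpow hN q S k]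
          ring_nf
  calc ∫⁻ y, ENNReal.ofReal (f y) ∂μ
      ≤ ∑' k : ℕ, ENNReal.ofReal (B * N ^ q * 2 ^ S * ((2 : ℝ) ^ S)⁻¹ ^ k) *
          μ (closedBall x (2 ^ k / N)) :=
        lintegral_le_tsum_mul_measure_of_forall_exists_mem μ hcover
    _ ≤ ∑' k : ℕ, ENNReal.ofReal (2 ^ S * B * c₁ * (2 ^ (q - S)) ^ k) :=
        ENNReal.tsum_le_tsum hterm
    _ = ENNReal.ofReal (∑' k : ℕ, 2 ^ S * B * c₁ * (2 ^ (q - S)) ^ k) :=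
        (ENNReal.ofReal_tsum_of_nonneg (fun k => by positivity)
          ((summable_geometric_of_lt_one hρ0 hρ1).mul_left _)).symm
    _ = ENNReal.ofReal (2 ^ S * (1 - 2 ^ (q - S))⁻¹ * B * c₁) := by
        rw [tsum_mul_left, tsum_geometric_of_lt_one hρ0 hρ1]
        ring_nf

/-- Lebesgue-type bound against a bounded density: if `μ*(B(x,r)) ≤ c₁ r^q` and `Φ_N` is
localized, then `sup_x ∫ |Φ_N(x,y)||g(y)| dμ*(y) ≤ C·A·c₁·‖g‖_∞`. -/
theorem stmt4 (q S : ℝ) (hq : 0 < q) (hqS : q < S) :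
    ∃ C : ℝ, 0 < C ∧
      ∀ (X : Type) [MetricSpace X] [MeasurableSpace X]
        (μ : Measure X) (c₁ : ℝ), 0 < c₁ →
        (∀ (x : X) (r : ℝ), 0 < r → μ (closedBall x r) ≤ ENNReal.ofReal (c₁ * r ^ q)) →
        ∀ (N A : ℝ), 1 ≤ N → 0 < A →
        ∀ (Φ : X → X → ℝ),
        (∀ x y, |Φ x y| ≤ A * N ^ q / max 1 ((N * dist x y) ^ S)) →
        ∀ (g : X → ℝ), Measurable g →
        ∀ (G : ℝ), (∀ y, |g y| ≤ G) →
        ∀ x : X,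
        ∫⁻ y, ENNReal.ofReal (|Φ x y| * |g y|) ∂μ ≤ ENNReal.ofReal (C * A * c₁ * G) := by
  have hρ1 : (2 : ℝ) ^ (q - S) < 1 := Real.rpow_lt_one_of_one_lt_of_neg one_lt_two (by linarith)
  refine ⟨2 ^ S * (1 - 2 ^ (q - S))⁻¹, mul_pos (by positivity) (inv_pos.2 (by linarith)), ?_⟩
  intro X _ _ μ c₁ hc₁ hμ N A hN hA Φ hΦ g _ G hG x
  have hG0 : 0 ≤ G := (abs_nonneg _).trans (hG x)
  calc ∫⁻ y, ENNReal.ofReal (|Φ x y| * |g y|) ∂μ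
      ≤ ENNReal.ofReal (2 ^ S * (1 - 2 ^ (q - S))⁻¹ * (A * G) * c₁) := by
        refine lintegral_ofReal_le_of_le_localized_kernel (hq.trans hqS).le hqS hc₁.le (hμ x)
          (zero_lt_one.trans_le hN) (by positivity) fun y => ?_
        calc |Φ x y| * |g y| ≤ A * N ^ q / max 1 ((N * dist x y) ^ S) * G :=
              mul_le_mul (hΦ x y) (hG y) (abs_nonneg _) (by positivity)
          _ = A * G * N ^ q / max 1 ((N * dist x y) ^ S) := by ring
    _ = ENNReal.ofReal (2 ^ S * (1 - 2 ^ (q - S))⁻¹ * A * c₁ * G) := by ring_nf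
end

section
/- Let (X, ρ, μ*) be a metric measure space with μ*(B(x,r)) ≤ c₁ r^q. Let Φ_N be a symmetric kernel satisfying |Φ_N(x,y)| ≤ A N^q / max(1,(N ρ(x,y))^S) with S > q, N ≥ 1. Let f₀ ∈ C(X) be bounded nonnegative and define Ψ_N(x,y) = ∫_X Φ_N(x,z) Φ_N(y,z) f₀(z) dμ*(z). Then Ψ_N satisfies the same type of localization: |Ψ_N(x,y)| ≤ C·A²·c₁·‖f₀‖_∞·N^q / max(1, (N ρ(x,y))^S) for a constant C depending only on q and S. -/
/-!
Split `X` according to which of `ρ(x,z)`, `ρ(y,z)` is at least `ρ(x,y)/2` (one of them is, by the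
triangle inequality). On that side the kernel factor is at most `2^S A N^q / max(1,(Nρ(x,y))^S)`,
and the other factor is integrated against the bound
`∫ N^q / max(1,(Nρ(w,z))^S) dμ(z) ≤ c₁ S/(S-q)`. The latter is a layer-cake computation: the
superlevel set at height `t ≤ N^q` lies in the ball of radius `(N^q/t)^{1/S}/N`, whose measure is
`≤ c₁ N^{-q} (N^q/t)^{q/S}`, and `t ↦ t^{-q/S}` is integrable at `0` because `q < S`.
-/

open MeasureTheory Metric Set

noncomputable def decayProfile (N q S d : ℝ) : ℝ := N ^ q / max 1 ((N * d) ^ S)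

section DecayProfile

variable {N q S d d' t : ℝ}

lemma decayProfile_nonneg (hN : 0 ≤ N) : 0 ≤ decayProfile N q S d :=
  div_nonneg (Real.rpow_nonneg hN q) (zero_le_one.trans (le_max_left _ _))

lemma decayProfile_le (hN : 0 ≤ N) : decayProfile N q S d ≤ N ^ q :=
  div_le_self (Real.rpow_nonneg hN q) (le_max_left _ _)

lemma continuous_decayProfile (hS : 0 ≤ S) : Continuous (decayProfile N q S) :=
  continuous_const.div
    (continuous_const.max ((continuous_const.mul continuous_id).rpow_const fun _ => Or.inr hS))
    fun _ => (zero_lt_one.trans_le (le_max_left _ _)).ne'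

lemma decayProfile_le_two_rpow_mul (hN : 0 ≤ N) (hS : 0 ≤ S) (hd : 0 ≤ d) (h : d ≤ 2 * d') :
    decayProfile N q S d' ≤ 2 ^ S * decayProfile N q S d := by
  have h2S : (1 : ℝ) ≤ 2 ^ S := Real.one_le_rpow one_le_two hS
  have hmax : max 1 ((N * d) ^ S) ≤ 2 ^ S * max 1 ((N * d') ^ S) := by
    refine max_le (h2S.trans (le_mul_of_one_le_right (by positivity) (le_max_left _ _))) ?_
    have hNd : N * d ≤ 2 * (N * d') := by nlinarith
    calc (N * d) ^ S ≤ (2 * (N * d')) ^ S := Real.rpow_le_rpow (by positivity) hNd hS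
      _ = 2 ^ S * (N * d') ^ S := Real.mul_rpow zero_le_two (by nlinarith)
      _ ≤ 2 ^ S * max 1 ((N * d') ^ S) := by gcongr; exact le_max_right _ _
  unfold decayProfile
  calc N ^ q / max 1 ((N * d') ^ S) = 2 ^ S * N ^ q / (2 ^ S * max 1 ((N * d') ^ S)) :=
        (mul_div_mul_left _ _ (by positivity)).symm
    _ ≤ 2 ^ S * N ^ q / max 1 ((N * d) ^ S) :=
        div_le_div_of_nonneg_left (by positivity) (by positivity) hmax
    _ = 2 ^ S * (N ^ q / max 1 ((N * d) ^ S)) := mul_div_assoc _ _ _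

lemma le_of_lt_decayProfile (hN : 0 < N) (hS : 0 < S) (hd : 0 ≤ d) (ht : 0 < t)
    (h : t < decayProfile N q S d) : d ≤ (N ^ q / t) ^ S⁻¹ / N := by
  have hpow : (N * d) ^ S < N ^ q / t := by
    rw [lt_div_iff₀ ht]
    calc (N * d) ^ S * t ≤ max 1 ((N * d) ^ S) * t := by gcongr; exact le_max_right _ _
      _ < N ^ q := by
        rwa [mul_comm, ← lt_div_iff₀ (zero_lt_one.trans_le (le_max_left _ _))]
  rw [le_div_iff₀ hN, mul_comm, Real.le_rpow_inv_iff_of_pos (by positivity) (by positivity) hS]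
  exact hpow.le

end DecayProfile

lemma lintegral_ofReal_le_of_meas_lt_le {α : Type*} [MeasurableSpace α] {μ : Measure α}
    {g : α → ℝ} {K T a : ℝ} (hg : Measurable g) (hg0 : ∀ z, 0 ≤ g z)
    (hgT : ∀ z, g z ≤ T) (hK : 0 ≤ K) (hT : 0 < T) (ha : a < 1)
    (hμ : ∀ t ∈ Ioc 0 T, μ {z | t < g z} ≤ ENNReal.ofReal (K * (T / t) ^ a)) :
    ∫⁻ z, ENNReal.ofReal (g z) ∂μ ≤ ENNReal.ofReal (K * T / (1 - a)) := by
  set h : ℝ → ℝ := fun t => K * T ^ a * t ^ (-a)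
  have hh : ∀ t, 0 ≤ t → K * (T / t) ^ a = h t := fun t ht => by
    rw [Real.div_rpow hT.le ht, div_eq_mul_inv, ← Real.rpow_neg ht, ← mul_assoc]
  have hint : IntegrableOn h (Ioc 0 T) :=
    ((intervalIntegrable_iff_integrableOn_Ioc_of_le hT.le).mp
      (intervalIntegral.intervalIntegrable_rpow' (by linarith))).const_mul _
  have hval : ∫ t in Ioc 0 T, h t = K * T / (1 - a) := by
    rw [← intervalIntegral.integral_of_le hT.le, intervalIntegral.integral_const_mul,
      integral_rpow (Or.inl (by linarith)), Real.zero_rpow (by linarith), sub_zero,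
      mul_div_assoc', mul_assoc, ← Real.rpow_add hT, add_neg_cancel_left, Real.rpow_one,
      neg_add_eq_sub]
  rw [lintegral_eq_lintegral_meas_lt μ (ae_of_all _ hg0) hg.aemeasurable]
  calc ∫⁻ t in Ioi 0, μ {z | t < g z}
      ≤ ∫⁻ t in Ioi 0, (Ioc 0 T).indicator (fun t => ENNReal.ofReal (h t)) t := by
        refine setLIntegral_mono' measurableSet_Ioi fun t ht => ?_
        by_cases htT : t ≤ T
        · have htT' : t ∈ Ioc 0 T := ⟨ht, htT⟩
          rw [indicator_of_mem htT', ← hh t (le_of_lt ht)]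
          exact hμ t htT'
        · have hempty : {z | t < g z} = ∅ :=
            eq_empty_of_forall_notMem fun z hz => htT ((le_of_lt hz).trans (hgT z))
          simp [hempty]
    _ = ∫⁻ t in Ioc 0 T, ENNReal.ofReal (h t) := by
        rw [lintegral_indicator measurableSet_Ioc, Measure.restrict_restrict measurableSet_Ioc,
          inter_eq_self_of_subset_left Ioc_subset_Ioi_self]
    _ = ENNReal.ofReal (K * T / (1 - a)) := by
        rw [← hval, ofReal_integral_eq_lintegral_ofReal hint]
        refine (ae_restrict_iff' measurableSet_Ioc).mpr (ae_of_all _ fun t ht => ?_)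
        rw [← hh t ht.1.le]
        exact mul_nonneg hK (Real.rpow_nonneg (div_nonneg hT.le ht.1.le) a)

section MetricMeasure

variable {X : Type*} [PseudoMetricSpace X] {N q S A : ℝ}

lemma continuous_decayProfile_dist (hS : 0 ≤ S) (x : X) :
    Continuous fun z => decayProfile N q S (dist x z) :=
  (continuous_decayProfile hS).comp (continuous_const.dist continuous_id)

lemma lintegral_decayProfile_le [MeasurableSpace X] [OpensMeasurableSpace X] {μ : Measure X}
    {c₁ : ℝ} (hc₁ : 0 ≤ c₁)
    (hμ : ∀ (x : X) (r : ℝ), 0 < r → μ (closedBall x r) ≤ ENNReal.ofReal (c₁ * r ^ q))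
    (hN : 0 < N) (hS : 0 < S) (hqS : q < S) (x : X) :
    ∫⁻ z, ENNReal.ofReal (decayProfile N q S (dist x z)) ∂μ
      ≤ ENNReal.ofReal (c₁ * (S / (S - q))) := by
  have hNq : 0 < N ^ q := Real.rpow_pos_of_pos hN q
  have hball : ∀ t ∈ Ioc 0 (N ^ q),
      {z | t < decayProfile N q S (dist x z)} ⊆ closedBall x ((N ^ q / t) ^ S⁻¹ / N) :=
    fun t ht z hz => by
      rw [mem_closedBall, dist_comm]
      exact le_of_lt_decayProfile hN hS dist_nonneg ht.1 hz
  have hradius : ∀ t ∈ Ioc 0 (N ^ q),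
      c₁ * ((N ^ q / t) ^ S⁻¹ / N) ^ q = c₁ / N ^ q * (N ^ q / t) ^ (q / S) := fun t ht => by
    have hNqt : 0 ≤ N ^ q / t := (div_pos hNq ht.1).le
    rw [Real.div_rpow (Real.rpow_nonneg hNqt _) hN.le, ← Real.rpow_mul hNqt, inv_mul_eq_div]
    ring
  have hconst : c₁ / N ^ q * N ^ q / (1 - q / S) = c₁ * (S / (S - q)) := by
    field_simp [hNq.ne', hS.ne', (sub_pos.2 hqS).ne']
  rw [← hconst]
  refine lintegral_ofReal_le_of_meas_lt_le
    (continuous_decayProfile_dist hS.le x).measurable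
    (fun _ => decayProfile_nonneg hN.le) (fun _ => decayProfile_le hN.le) (by positivity) hNq
    ((div_lt_one hS).2 hqS) fun t ht => ?_
  rw [← hradius t ht]
  exact (measure_mono (hball t ht)).trans (hμ x _ (by have := ht.1; positivity))

lemma abs_mul_abs_le_of_dist_le (hN : 0 ≤ N) (hS : 0 ≤ S) (hA : 0 ≤ A) {Φ : X → X → ℝ}
    (hΦ : ∀ x y, |Φ x y| ≤ A * decayProfile N q S (dist x y)) {x y z : X}
    (h : dist x y ≤ 2 * dist x z) :
    |Φ x z| * |Φ y z|
      ≤ 2 ^ S * A ^ 2 * decayProfile N q S (dist x y) * decayProfile N q S (dist y z) := by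
  have hx : |Φ x z| ≤ A * (2 ^ S * decayProfile N q S (dist x y)) :=
    (hΦ x z).trans (mul_le_mul_of_nonneg_left
      (decayProfile_le_two_rpow_mul hN hS dist_nonneg h) hA)
  calc |Φ x z| * |Φ y z|
      ≤ A * (2 ^ S * decayProfile N q S (dist x y)) * (A * decayProfile N q S (dist y z)) :=
        mul_le_mul hx (hΦ y z) (abs_nonneg _) ((abs_nonneg _).trans hx)
    _ = _ := by ring

lemma abs_mul_abs_le (hN : 0 ≤ N) (hS : 0 ≤ S) (hA : 0 ≤ A) {Φ : X → X → ℝ}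
    (hΦ : ∀ x y, |Φ x y| ≤ A * decayProfile N q S (dist x y)) (x y z : X) :
    |Φ x z| * |Φ y z| ≤ 2 ^ S * A ^ 2 * decayProfile N q S (dist x y) *
      (decayProfile N q S (dist x z) + decayProfile N q S (dist y z)) := by
  have hcoef : 0 ≤ 2 ^ S * A ^ 2 * decayProfile N q S (dist x y) :=
    mul_nonneg (by positivity) (decayProfile_nonneg hN)
  rcases le_or_gt (dist x y) (2 * dist x z) with h | h
  · exact (abs_mul_abs_le_of_dist_le hN hS hA hΦ h).trans
      (mul_le_mul_of_nonneg_left (le_add_of_nonneg_left (decayProfile_nonneg hN)) hcoef)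
  · have h' : dist y x ≤ 2 * dist y z := by
      linarith [dist_triangle x z y, dist_comm z y, dist_comm x y]
    rw [mul_comm |Φ x z|]
    refine (abs_mul_abs_le_of_dist_le hN hS hA hΦ h').trans ?_
    rw [dist_comm y x]
    exact mul_le_mul_of_nonneg_left (le_add_of_nonneg_right (decayProfile_nonneg hN)) hcoef

theorem abs_integral_mul_mul_le [MeasurableSpace X] [OpensMeasurableSpace X] {μ : Measure X}
    {c₁ F : ℝ} {Φ : X → X → ℝ} {f : X → ℝ} (hc₁ : 0 ≤ c₁)
    (hμ : ∀ (x : X) (r : ℝ), 0 < r → μ (closedBall x r) ≤ ENNReal.ofReal (c₁ * r ^ q))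
    (hN : 0 < N) (hS : 0 < S) (hqS : q < S) (hA : 0 ≤ A)
    (hΦ : ∀ x y, |Φ x y| ≤ A * decayProfile N q S (dist x y))
    (hf : ∀ z, 0 ≤ f z) (hF : ∀ z, f z ≤ F) (x y : X) :
    |∫ z, Φ x z * Φ y z * f z ∂μ|
      ≤ 2 * 2 ^ S * (S / (S - q)) * A ^ 2 * c₁ * F * decayProfile N q S (dist x y) := by
  set P : X → X → ℝ := fun w z => decayProfile N q S (dist w z)
  set K := 2 ^ S * A ^ 2 * F * P x y
  set L := c₁ * (S / (S - q))
  have hP : ∀ w z, 0 ≤ P w z := fun _ _ => decayProfile_nonneg hN.le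
  have hF0 : 0 ≤ F := (hf x).trans (hF x)
  have hK : 0 ≤ K := mul_nonneg (by positivity) (hP x y)
  have hL : 0 ≤ L := mul_nonneg hc₁ (div_nonneg hS.le (sub_pos.2 hqS).le)
  have hpointwise : ∀ z, ‖Φ x z * Φ y z * f z‖ ≤ K * (P x z + P y z) := fun z => by
    rw [norm_mul, norm_mul, Real.norm_eq_abs, Real.norm_eq_abs, Real.norm_of_nonneg (hf z)]
    have hΦΦ := abs_mul_abs_le hN.le hS.le hA hΦ x y z
    calc |Φ x z| * |Φ y z| * f z ≤ 2 ^ S * A ^ 2 * P x y * (P x z + P y z) * F :=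
          mul_le_mul hΦΦ (hF z) (hf z) ((mul_nonneg (abs_nonneg _) (abs_nonneg _)).trans hΦΦ)
      _ = K * (P x z + P y z) := by ring
  have hlintegral :
      ∫⁻ z, ENNReal.ofReal ‖Φ x z * Φ y z * f z‖ ∂μ ≤ ENNReal.ofReal (K * (L + L)) :=
    calc ∫⁻ z, ENNReal.ofReal ‖Φ x z * Φ y z * f z‖ ∂μ
        ≤ ∫⁻ z, ENNReal.ofReal K * (ENNReal.ofReal (P x z) + ENNReal.ofReal (P y z)) ∂μ :=
          lintegral_mono fun z => by
            rw [← ENNReal.ofReal_add (hP x z) (hP y z), ← ENNReal.ofReal_mul hK]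
            exact ENNReal.ofReal_le_ofReal (hpointwise z)
      _ = ENNReal.ofReal K *
            (∫⁻ z, ENNReal.ofReal (P x z) ∂μ + ∫⁻ z, ENNReal.ofReal (P y z) ∂μ) := by
          rw [lintegral_const_mul' _ _ ENNReal.ofReal_ne_top, lintegral_add_left
            (continuous_decayProfile_dist hS.le x).measurable.ennreal_ofReal]
      _ ≤ ENNReal.ofReal K * (ENNReal.ofReal L + ENNReal.ofReal L) := by
          gcongr <;> exact lintegral_decayProfile_le hc₁ hμ hN hS hqS _
      _ = ENNReal.ofReal (K * (L + L)) := by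
          rw [← ENNReal.ofReal_add hL hL, ← ENNReal.ofReal_mul hK]
  calc |∫ z, Φ x z * Φ y z * f z ∂μ|
      ≤ (∫⁻ z, ENNReal.ofReal ‖Φ x z * Φ y z * f z‖ ∂μ).toReal := by
        rw [← Real.norm_eq_abs]
        exact norm_integral_le_lintegral_norm _
    _ ≤ K * (L + L) := ENNReal.toReal_le_of_le_ofReal (by positivity) hlintegral
    _ = _ := by ring

end MetricMeasure

/-- The iterated kernel `Ψ_N(x,y) = ∫ Φ_N(x,z) Φ_N(y,z) f₀(z) dμ*(z)` inherits the
localization of `Φ_N`: `|Ψ_N(x,y)| ≤ C·A²·c₁·‖f₀‖_∞·N^q / max(1,(Nρ(x,y))^S)`. -/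
theorem stmt9 (q S : ℝ) (hq : 0 < q) (hqS : q < S) :
    ∃ C : ℝ, 0 < C ∧
      ∀ (X : Type) [MetricSpace X] [MeasurableSpace X] [BorelSpace X]
        (μ : Measure X) (c₁ : ℝ), 0 < c₁ →
        (∀ (x : X) (r : ℝ), 0 < r → μ (closedBall x r) ≤ ENNReal.ofReal (c₁ * r ^ q)) →
        ∀ (N A : ℝ), 1 ≤ N → 0 < A →
        ∀ (Φ : X → X → ℝ), (∀ x, Measurable (Φ x)) →
        (∀ x y, Φ x y = Φ y x) →
        (∀ x y, |Φ x y| ≤ A * N ^ q / max 1 ((N * dist x y) ^ S)) →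
        ∀ (f₀ : X → ℝ), Continuous f₀ → (∀ z, 0 ≤ f₀ z) →
        ∀ F : ℝ, (∀ z, f₀ z ≤ F) →
        ∀ x y : X,
        |∫ z, Φ x z * Φ y z * f₀ z ∂μ|
          ≤ C * A ^ 2 * c₁ * F * N ^ q / max 1 ((N * dist x y) ^ S) := by
  have hS : 0 < S := hq.trans hqS
  refine ⟨2 * 2 ^ S * (S / (S - q)), by have := sub_pos.2 hqS; positivity, ?_⟩
  intro X _ _ _ μ c₁ hc₁ hμ N A hN hA Φ _ _ hΦ f₀ _ hf₀ F hF x y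
  rw [mul_div_assoc]
  exact abs_integral_mul_mul_le hc₁.le hμ (by linarith) hS hqS hA.le
    (fun x y => (hΦ x y).trans_eq (mul_div_assoc _ _ _)) hf₀ hF x y
end

section
/- The Hermite functions ψ_k(x) = h_k(x)·exp(−x²/2), where h_k are the orthonormalized Hermite polynomials defined by the three-term recurrence h_k(x) = √(2/k)·x·h_{k−1}(x) − √((k−1)/k)·h_{k−2}(x) with h₀(x) = π^{−1/4} and h₁(x) = √2·π^{−1/4}·x, form an orthonormal system in L²(ℝ) with respect to Lebesgue measure: ∫_ℝ ψ_j(x) ψ_k(x) dx = δ_{jk}. -/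
open MeasureTheory

/-- The orthonormalized Hermite polynomials, defined by the three-term recurrence
`h_k(x) = √(2/k)·x·h_{k−1}(x) − √((k−1)/k)·h_{k−2}(x)`,
`h₀(x) = π^{−1/4}`, `h₁(x) = √2·π^{−1/4}·x`. -/
noncomputable def hermiteH : ℕ → ℝ → ℝ
  | 0, _ => Real.pi ^ (-(1 : ℝ) / 4)
  | 1, x => Real.sqrt 2 * Real.pi ^ (-(1 : ℝ) / 4) * x
  | (k + 2), x =>
      Real.sqrt (2 / ((k : ℝ) + 2)) * x * hermiteH (k + 1) x
        - Real.sqrt (((k : ℝ) + 1) / ((k : ℝ) + 2)) * hermiteH k x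

/-- The Hermite function `ψ_k(x) = h_k(x)·exp(−x²/2)`. -/
noncomputable def hermitePsi (k : ℕ) (x : ℝ) : ℝ :=
  hermiteH k x * Real.exp (-x ^ 2 / 2)

/-!
Up to the constant `c_k = π^{-1/4} / √(k!)`, `h_k(x)` is the probabilists' Hermite polynomial
`He_k(√2 x)` (Mathlib's `Polynomial.hermite`), as both sides satisfy the same three-term
recurrence. After the substitution `y = √2 x` orthonormality of the `ψ_k` becomes
`∫ He_j He_k e^{-y²/2} dy = δ_{jk} k! √(2π)`. By Rodrigues' formula
`He_k e^{-y²/2} = (-1)^k (d/dy)^k e^{-y²/2}`, so `k` integrations by parts turn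
`∫ P He_k e^{-y²/2}` into `∫ P^{(k)} e^{-y²/2}`; for `P = He_j` with `j ≤ k` the polynomial
`P^{(k)}` vanishes unless `j = k`, in which case it is the constant `k!`.
-/

open Polynomial Real
open scoped Nat

namespace Polynomial

theorem derivative_hermite_succ (n : ℕ) :
    derivative (hermite (n + 1)) = (n + 1) • hermite n := by
  induction n with
  | zero => simp
  | succ n ih =>
    rw [hermite_succ (n + 1), derivative_sub, derivative_mul, derivative_X, one_mul, ih,
      derivative_smul, mul_smul_comm, add_sub_assoc, ← smul_sub, ← hermite_succ, succ_nsmul]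
    module

theorem hermite_add_two (n : ℕ) :
    hermite (n + 2) = X * hermite (n + 1) - (n + 1) • hermite n := by
  rw [hermite_succ, derivative_hermite_succ]

theorem iterate_derivative_hermite_self (n : ℕ) :
    derivative^[n] (hermite n) = C (n ! : ℤ) := by
  induction n with
  | zero => simp
  | succ n ih =>
    rw [Function.iterate_succ_apply, derivative_hermite_succ, iterate_derivative_smul, ih,
      Nat.factorial_succ, nsmul_eq_mul]
    simp

end Polynomial

noncomputable def gaussianWeight (x : ℝ) : ℝ := exp (-(x ^ 2 / 2))

theorem integrable_eval_mul_gaussianWeight (P : ℝ[X]) :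
    Integrable fun x => P.eval x * gaussianWeight x := by
  have integrable_pow_mul (n : ℕ) : Integrable fun x : ℝ => x ^ n * gaussianWeight x := by
    have h := integrable_rpow_mul_exp_neg_mul_sq (b := 1 / 2) (by norm_num)
      (s := n) (neg_one_lt_zero.trans_le n.cast_nonneg)
    simp_rw [rpow_natCast, neg_mul, one_div_mul_eq_div] at h
    exact h
  simp_rw [eval_eq_sum_range, Finset.sum_mul, mul_assoc]
  exact integrable_finsetSum _ fun i _ => (integrable_pow_mul i).const_mul _

theorem integral_gaussianWeight : ∫ x, gaussianWeight x = √(2 * π) := by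
  have h := integral_gaussian (1 / 2)
  simp_rw [neg_mul, one_div_mul_eq_div, div_div_eq_mul_div, div_one] at h
  rwa [mul_comm] at h

theorem iterate_deriv_gaussianWeight (k : ℕ) :
    deriv^[k] gaussianWeight = fun x => (-1) ^ k * aeval x (hermite k) * gaussianWeight x :=
  funext (deriv_gaussian_eq_hermite_mul_gaussian k)

theorem integrable_eval_mul_iterate_deriv_gaussianWeight (P : ℝ[X]) (k : ℕ) :
    Integrable fun x => P.eval x * deriv^[k] gaussianWeight x := by
  have h := integrable_eval_mul_gaussianWeight
    (C ((-1) ^ k) * P * (hermite k).map (algebraMap ℤ ℝ))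
  simp only [eval_mul, eval_C, eval_map_algebraMap] at h
  simp only [iterate_deriv_gaussianWeight]
  convert h using 2
  ring

theorem hasDerivAt_iterate_deriv_gaussianWeight (k : ℕ) (x : ℝ) :
    HasDerivAt (deriv^[k] gaussianWeight) (deriv^[k + 1] gaussianWeight x) x := by
  have hdiff : Differentiable ℝ (deriv^[k] gaussianWeight) := by
    rw [iterate_deriv_gaussianWeight]
    exact ((Polynomial.differentiable_aeval _).const_mul _).mul
      (by unfold gaussianWeight; fun_prop)
  rw [Function.iterate_succ_apply']
  exact (hdiff x).hasDerivAt

theorem integral_eval_mul_iterate_deriv_gaussianWeight (P : ℝ[X]) (k : ℕ) :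
    ∫ x, P.eval x * deriv^[k] gaussianWeight x
      = (-1) ^ k * ∫ x, (derivative^[k] P).eval x * gaussianWeight x := by
  induction k generalizing P with
  | zero => simp
  | succ k ih =>
    have by_parts := integral_mul_deriv_eq_deriv_mul_of_integrable
      (fun x _ => P.hasDerivAt x) (fun x _ => hasDerivAt_iterate_deriv_gaussianWeight k x)
      (integrable_eval_mul_iterate_deriv_gaussianWeight P (k + 1))
      (integrable_eval_mul_iterate_deriv_gaussianWeight (derivative P) k)
      (integrable_eval_mul_iterate_deriv_gaussianWeight P k)
    rw [by_parts, ih, ← Function.iterate_succ_apply, pow_succ]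
    ring

theorem integral_eval_mul_hermite_mul_gaussianWeight (P : ℝ[X]) (k : ℕ) :
    ∫ x, P.eval x * aeval x (hermite k) * gaussianWeight x
      = ∫ x, (derivative^[k] P).eval x * gaussianWeight x := by
  have rodrigues (x : ℝ) : P.eval x * aeval x (hermite k) * gaussianWeight x
      = (-1) ^ k * (P.eval x * deriv^[k] gaussianWeight x) := by
    rw [iterate_deriv_gaussianWeight]
    have sign_sq : ((-1 : ℝ) ^ k) * (-1) ^ k = 1 := by rw [← mul_pow]; norm_num
    linear_combination (-(P.eval x * aeval x (hermite k) * gaussianWeight x)) * sign_sq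
  simp_rw [rodrigues]
  rw [integral_const_mul, integral_eval_mul_iterate_deriv_gaussianWeight, ← mul_assoc,
    ← mul_pow]
  norm_num

theorem integral_hermite_mul_hermite_mul_gaussianWeight_of_le {j k : ℕ} (hjk : j ≤ k) :
    ∫ x, aeval x (hermite j) * aeval x (hermite k) * gaussianWeight x
      = if j = k then j ! * √(2 * π) else 0 := by
  simp_rw [← eval_map_algebraMap (hermite j), integral_eval_mul_hermite_mul_gaussianWeight,
    iterate_derivative_map]
  rcases hjk.lt_or_eq with hlt | rfl
  · rw [iterate_derivative_eq_zero (natDegree_hermite.trans_lt hlt), if_neg hlt.ne]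
    simp
  · rw [iterate_derivative_hermite_self, if_pos rfl]
    simp only [Polynomial.map_C, eval_C]
    rw [integral_const_mul, integral_gaussianWeight]
    simp

theorem integral_hermite_mul_hermite_mul_gaussianWeight (j k : ℕ) :
    ∫ x, aeval x (hermite j) * aeval x (hermite k) * gaussianWeight x
      = if j = k then j ! * √(2 * π) else 0 := by
  rcases le_total j k with hjk | hkj
  · exact integral_hermite_mul_hermite_mul_gaussianWeight_of_le hjk
  · simp_rw [mul_comm (aeval _ (hermite j))]
    rw [integral_hermite_mul_hermite_mul_gaussianWeight_of_le hkj]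
    by_cases h : j = k
    · simp [h]
    · simp [h, Ne.symm h]

noncomputable def hermiteConst (k : ℕ) : ℝ := π ^ (-(1 : ℝ) / 4) / √(k ! : ℝ)

theorem hermiteConst_succ (k : ℕ) : hermiteConst (k + 1) = hermiteConst k / √(k + 1) := by
  rw [hermiteConst, hermiteConst, Nat.factorial_succ, Nat.cast_mul, sqrt_mul (by positivity),
    Nat.cast_succ, div_div, mul_comm]

theorem hermiteConst_mul_self (k : ℕ) : hermiteConst k * hermiteConst k = 1 / (√π * k !) := by
  have pi_pow : π ^ (-(1 : ℝ) / 4) * π ^ (-(1 : ℝ) / 4) = (√π)⁻¹ := by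
    rw [← rpow_add pi_pos, sqrt_eq_rpow, ← rpow_neg pi_pos.le]
    norm_num
  unfold hermiteConst
  rw [div_mul_div_comm, pi_pow, mul_self_sqrt (by positivity)]
  field_simp

theorem hermiteH_eq_hermiteConst_mul_aeval_hermite : ∀ (k : ℕ) (x : ℝ),
    hermiteH k x = hermiteConst k * aeval (√2 * x) (hermite k)
  | 0, x => by simp [hermiteH, hermiteConst]
  | 1, x => by
    simp [hermiteH, hermiteConst]
    ring
  | k + 2, x => by
    have hsq : √((k : ℝ) + 1) ^ 2 = k + 1 := sq_sqrt (by positivity)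
    rw [hermiteH, hermiteH_eq_hermiteConst_mul_aeval_hermite (k + 1) x,
      hermiteH_eq_hermiteConst_mul_aeval_hermite k x, hermite_add_two,
      hermiteConst_succ (k + 1), hermiteConst_succ k, sqrt_div' _ (by positivity),
      sqrt_div' _ (by positivity)]
    simp only [map_sub, map_mul, aeval_X, nsmul_eq_mul, map_natCast]
    push_cast
    rw [show (k : ℝ) + 1 + 1 = k + 2 by ring]
    field_simp
    linear_combination (-hermiteConst k * aeval (√2 * x) (hermite k)) * hsq

theorem hermitePsi_mul_hermitePsi (j k : ℕ) (x : ℝ) :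
    hermitePsi j x * hermitePsi k x =
      hermiteConst j * hermiteConst k *
        (aeval (√2 * x) (hermite j) * aeval (√2 * x) (hermite k) *
          gaussianWeight (√2 * x)) := by
  have gaussian_sq : exp (-x ^ 2 / 2) * exp (-x ^ 2 / 2) = gaussianWeight (√2 * x) := by
    rw [gaussianWeight, ← exp_add, mul_pow, sq_sqrt zero_le_two]
    ring_nf
  rw [hermitePsi, hermitePsi, hermiteH_eq_hermiteConst_mul_aeval_hermite,
    hermiteH_eq_hermiteConst_mul_aeval_hermite, ← gaussian_sq]
  ring

/-- The Hermite functions `ψ_k` form an orthonormal system in `L²(ℝ)` with respect to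
Lebesgue measure: `∫ ψ_j ψ_k dx = δ_{jk}`. -/
theorem stmt15 (j k : ℕ) :
    ∫ x : ℝ, hermitePsi j x * hermitePsi k x = if j = k then 1 else 0 := by
  simp_rw [hermitePsi_mul_hermitePsi]
  rw [integral_const_mul, Measure.integral_comp_mul_left
    (fun y => aeval y (hermite j) * aeval y (hermite k) * gaussianWeight y),
    integral_hermite_mul_hermite_mul_gaussianWeight, smul_eq_mul]
  split_ifs with hjk
  · subst hjk
    rw [hermiteConst_mul_self, abs_of_pos (by positivity), sqrt_mul zero_le_two]
    field_simp
  · simp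
end

section
/- Let (X, ρ) be a metric space, let Φ_N satisfy |Φ_N(x,y)| ≤ A N^q / max(1,(N ρ(x,y))^S) with S > q > 0 and N ≥ 1, and let ν be the counting measure of a finite set C with minimal separation η and η̃ = min(1, η/3), assumed to satisfy ν(B(x,r)) ≤ c·(r + η̃)^q / η̃^q for all x, r (as guaranteed by two-sided ball measure bounds). Then for any fixed x ∈ X, ∑_{y_k ∈ C, ρ(x,y_k) > η̃/3} |Φ_N(x, y_k)| ≤ C·A·c·N^q·(N η̃)^{−S}, with C depending only on q and S. -/
open scoped Classical

open Metric

/-- Far-field row sum estimate: for a localized kernel and points whose counting measure is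
`η̃`-regular with constant `c/η̃^q`, one has
`∑_{ρ(x,y_k) > η̃/3} |Φ_N(x,y_k)| ≤ C·A·c·N^q·(Nη̃)^{−S}`. -/
theorem stmt16 (q S : ℝ) (hq : 0 < q) (hqS : q < S) :
    ∃ C : ℝ, 0 < C ∧
      ∀ (X : Type) [MetricSpace X]
        (M : ℕ) (y : Fin M → X) (η η' c : ℝ), 0 < η → 0 < c →
        (∀ j k, j ≠ k → η ≤ dist (y j) (y k)) →
        η' = min 1 (η / 3) →
        (∀ (x : X) (r : ℝ), 0 < r →
          ((Finset.univ.filter (fun k => dist x (y k) ≤ r)).card : ℝ)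
            ≤ c * (r + η') ^ q / η' ^ q) →
        ∀ (N A : ℝ), 1 ≤ N → 0 < A →
        ∀ (Φ : X → X → ℝ),
        (∀ x y, |Φ x y| ≤ A * N ^ q / max 1 ((N * dist x y) ^ S)) →
        ∀ x : X,
        ∑ k ∈ Finset.univ.filter (fun k => η' / 3 < dist x (y k)), |Φ x (y k)|
          ≤ C * A * c * N ^ q * (N * η') ^ (-S) := by
  have h2 : (0:ℝ) < 2 := by norm_num
  set r : ℝ := (2:ℝ) ^ (q - S) with hrdef
  have hr0 : 0 < r := Real.rpow_pos_of_pos h2 _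
  have hr1 : r < 1 := by
    have : (2:ℝ) ^ (q - S) < 2 ^ (0:ℝ) :=
      Real.rpow_lt_rpow_of_exponent_lt (by norm_num) (by linarith)
    simpa [hrdef] using this
  have hr1' : (0:ℝ) < 1 - r := by linarith
  refine ⟨(3:ℝ) ^ S * (2:ℝ) ^ q * (1 - r)⁻¹,
    mul_pos (mul_pos (Real.rpow_pos_of_pos (by norm_num) S)
      (Real.rpow_pos_of_pos h2 q)) (inv_pos.mpr hr1'), ?_⟩
  intro X _ M y η η' c hη hc _hsep hη'def hcount N A hN hA Φ hΦ x
  have hη' : 0 < η' := by rw [hη'def]; positivity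
  have hN0 : 0 < N := lt_of_lt_of_le one_pos hN
  set s := Finset.univ.filter (fun k : Fin M => η' / 3 < dist x (y k)) with hs
  set f : Fin M → ℕ := fun k => Nat.log 2 ⌊3 * dist x (y k) / η'⌋₊ with hf
  set K : ℝ := A * c * N ^ q * (N * η') ^ (-S) * ((3:ℝ) ^ S * (2:ℝ) ^ q) with hK
  have hK0 : 0 ≤ K := by
    have := Real.rpow_pos_of_pos (mul_pos hN0 hη') (-S)
    positivity
  -- key geometric facts about the fiber index
  have hkey : ∀ k ∈ s, (2:ℝ) ^ (f k) * (η' / 3) ≤ dist x (y k) ∧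
      dist x (y k) ≤ (2:ℝ) ^ (f k + 1) * (η' / 3) := by
    intro k hk
    have hd : η' / 3 < dist x (y k) := by
      have := Finset.mem_filter.mp hk; exact this.2
    have hd0 : 0 < dist x (y k) := lt_trans (by positivity) hd
    set t : ℝ := 3 * dist x (y k) / η' with ht
    have ht1 : 1 < t := by
      rw [ht, lt_div_iff₀ hη']; linarith
    have ht0 : 0 ≤ t := by positivity
    have hfl1 : 1 ≤ ⌊t⌋₊ := Nat.le_floor (by exact_mod_cast ht1.le)
    have hflne : ⌊t⌋₊ ≠ 0 := by omega
    have hlow : (2:ℝ) ^ (f k) ≤ t := by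
      have h1 : 2 ^ (f k) ≤ ⌊t⌋₊ := Nat.pow_log_le_self 2 hflne
      have h2' : ((2:ℕ) ^ (f k) : ℝ) ≤ (⌊t⌋₊ : ℝ) := by exact_mod_cast h1
      calc (2:ℝ) ^ (f k) = ((2:ℕ) ^ (f k) : ℝ) := by push_cast; ring
        _ ≤ (⌊t⌋₊ : ℝ) := h2'
        _ ≤ t := Nat.floor_le ht0
    have hhigh : t ≤ (2:ℝ) ^ (f k + 1) := by
      have h1 : ⌊t⌋₊ < 2 ^ (f k + 1) := Nat.lt_pow_succ_log_self (by norm_num) _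
      have h2' : ⌊t⌋₊ + 1 ≤ 2 ^ (f k + 1) := h1
      have h3 : t < (⌊t⌋₊ : ℝ) + 1 := Nat.lt_floor_add_one t
      have h4 : ((⌊t⌋₊ : ℕ) : ℝ) + 1 ≤ ((2:ℕ) ^ (f k + 1) : ℝ) := by exact_mod_cast h2'
      have : t ≤ ((2:ℕ) ^ (f k + 1) : ℝ) := by linarith
      calc t ≤ ((2:ℕ) ^ (f k + 1) : ℝ) := this
        _ = (2:ℝ) ^ (f k + 1) := by push_cast; ring
    have htd : t * (η' / 3) = dist x (y k) := by
      rw [ht]; field_simp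
    constructor
    · have h := mul_le_mul_of_nonneg_right hlow (by positivity : (0:ℝ) ≤ η' / 3)
      rw [htd] at h; exact h
    · have h := mul_le_mul_of_nonneg_right hhigh (by positivity : (0:ℝ) ≤ η' / 3)
      rw [htd] at h; exact h
  -- per-term bound on fiber j
  have hterm : ∀ j : ℕ, ∀ k ∈ s.filter (fun k => f k = j),
      |Φ x (y k)| ≤ A * N ^ q * ((N * ((2:ℝ) ^ j * (η' / 3))) ^ S)⁻¹ := by
    intro j k hk
    have hks : k ∈ s := (Finset.mem_filter.mp hk).1
    have hfk : f k = j := (Finset.mem_filter.mp hk).2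
    have hlow := (hkey k hks).1
    rw [hfk] at hlow
    have hb0 : (0:ℝ) < N * ((2:ℝ) ^ j * (η' / 3)) := by positivity
    have hbS : (N * ((2:ℝ) ^ j * (η' / 3))) ^ S ≤ max 1 ((N * dist x (y k)) ^ S) := by
      refine le_trans ?_ (le_max_right _ _)
      apply Real.rpow_le_rpow hb0.le ?_ (le_of_lt (lt_trans hq hqS))
      have : (2:ℝ) ^ j * (η' / 3) ≤ dist x (y k) := by linarith
      nlinarith [hN0]
    calc |Φ x (y k)| ≤ A * N ^ q / max 1 ((N * dist x (y k)) ^ S) := hΦ x (y k)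
      _ ≤ A * N ^ q / (N * ((2:ℝ) ^ j * (η' / 3))) ^ S := by
          apply div_le_div_of_nonneg_left ?_ (Real.rpow_pos_of_pos hb0 S) hbS
          have := Real.rpow_pos_of_pos hN0 q
          positivity
      _ = A * N ^ q * ((N * ((2:ℝ) ^ j * (η' / 3))) ^ S)⁻¹ := by
          rw [div_eq_mul_inv]
  -- cardinality bound on fiber j
  have hcard : ∀ j : ℕ, ((s.filter (fun k => f k = j)).card : ℝ)
      ≤ c * ((2:ℝ) ^ (j + 1)) ^ q := by
    intro j
    set R : ℝ := (2:ℝ) ^ (j + 1) * (η' / 3) with hR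
    have hR0 : 0 < R := by positivity
    have hsub : s.filter (fun k => f k = j) ⊆
        Finset.univ.filter (fun k => dist x (y k) ≤ R) := by
      intro k hk
      have hks : k ∈ s := (Finset.mem_filter.mp hk).1
      have hfk : f k = j := (Finset.mem_filter.mp hk).2
      have := (hkey k hks).2
      rw [hfk] at this
      simp only [Finset.mem_filter, Finset.mem_univ, true_and]
      exact this
    have h1 : ((s.filter (fun k => f k = j)).card : ℝ)
        ≤ ((Finset.univ.filter (fun k => dist x (y k) ≤ R)).card : ℝ) := by
      exact_mod_cast Finset.card_le_card hsub
    have h2 := hcount x R hR0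
    have h3 : R + η' ≤ η' * (2:ℝ) ^ (j + 1) := by
      have h4 : (2:ℝ) ≤ (2:ℝ) ^ (j + 1) := by
        calc (2:ℝ) = 2 ^ 1 := (pow_one 2).symm
          _ ≤ 2 ^ (j + 1) := pow_le_pow_right₀ (by norm_num) (Nat.succ_le_succ (Nat.zero_le j))
      rw [hR]
      nlinarith [hη']
    have h5 : (R + η') ^ q ≤ (η' * (2:ℝ) ^ (j + 1)) ^ q :=
      Real.rpow_le_rpow (by positivity) h3 hq.le
    have h6 : (η' * (2:ℝ) ^ (j + 1)) ^ q = η' ^ q * ((2:ℝ) ^ (j + 1)) ^ q :=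
      Real.mul_rpow hη'.le (by positivity)
    have hηq : (0:ℝ) < η' ^ q := Real.rpow_pos_of_pos hη' q
    calc ((s.filter (fun k => f k = j)).card : ℝ)
        ≤ c * (R + η') ^ q / η' ^ q := le_trans h1 h2
      _ ≤ c * (η' ^ q * ((2:ℝ) ^ (j + 1)) ^ q) / η' ^ q := by
          rw [← h6]
          gcongr
      _ = c * ((2:ℝ) ^ (j + 1)) ^ q := by
          field_simp
  -- algebraic identity
  have hiden : ∀ j : ℕ, c * ((2:ℝ) ^ (j + 1)) ^ q *
      (A * N ^ q * ((N * ((2:ℝ) ^ j * (η' / 3))) ^ S)⁻¹) = K * r ^ j := by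
    intro j
    have e1 : N * ((2:ℝ) ^ j * (η' / 3)) = (N * η') * ((2:ℝ) ^ j / 3) := by ring
    have e2 : ((N * η') * ((2:ℝ) ^ j / 3)) ^ S
        = (N * η') ^ S * (((2:ℝ) ^ j) ^ S / (3:ℝ) ^ S) := by
      rw [Real.mul_rpow (by positivity) (by positivity),
        Real.div_rpow (by positivity) (by norm_num)]
    have e3 : ((2:ℝ) ^ (j + 1)) ^ q * (((2:ℝ) ^ j) ^ S)⁻¹ = (2:ℝ) ^ q * r ^ j := by
      rw [← Real.rpow_natCast 2 (j + 1), ← Real.rpow_natCast 2 j,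
        ← Real.rpow_mul (by norm_num), ← Real.rpow_mul (by norm_num),
        ← Real.rpow_neg (by norm_num), hrdef,
        ← Real.rpow_natCast ((2:ℝ) ^ (q - S)) j,
        ← Real.rpow_mul (by norm_num),
        ← Real.rpow_add h2, ← Real.rpow_add h2]
      congr 1
      push_cast
      ring
    have e4 : (N * η') ^ (-S) = ((N * η') ^ S)⁻¹ :=
      Real.rpow_neg (by positivity) S
    have hNηS : (0:ℝ) < (N * η') ^ S := Real.rpow_pos_of_pos (by positivity) S
    have h3S : (0:ℝ) < (3:ℝ) ^ S := Real.rpow_pos_of_pos (by norm_num) S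
    have h2jS : (0:ℝ) < ((2:ℝ) ^ j) ^ S := Real.rpow_pos_of_pos (by positivity) S
    have e5 : (((2:ℝ) ^ j) ^ S / (3:ℝ) ^ S)⁻¹ = (3:ℝ) ^ S * (((2:ℝ) ^ j) ^ S)⁻¹ := by
      rw [inv_div, div_eq_mul_inv, mul_comm]
    have e6 : ((N * η') ^ S * (((2:ℝ) ^ j) ^ S / (3:ℝ) ^ S))⁻¹
        = ((N * η') ^ S)⁻¹ * ((3:ℝ) ^ S * (((2:ℝ) ^ j) ^ S)⁻¹) := by
      rw [mul_inv, e5]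
    rw [e1, e2, hK, e4, e6]
    linear_combination A * c * N ^ q * ((N * η') ^ S)⁻¹ * (3:ℝ) ^ S * e3
  -- assemble
  have hfib : ∑ k ∈ s, |Φ x (y k)|
      = ∑ j ∈ s.image f, ∑ k ∈ s.filter (fun k => f k = j), |Φ x (y k)| :=
    (Finset.sum_fiberwise_of_maps_to (fun k hk => Finset.mem_image_of_mem f hk) _).symm
  rw [hs] at hfib ⊢
  rw [hfib]
  have hinner : ∀ j ∈ s.image f,
      ∑ k ∈ s.filter (fun k => f k = j), |Φ x (y k)| ≤ K * r ^ j := by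
    intro j _
    have hB0 : (0:ℝ) ≤ A * N ^ q * ((N * ((2:ℝ) ^ j * (η' / 3))) ^ S)⁻¹ := by
      have := Real.rpow_pos_of_pos (show (0:ℝ) < N * ((2:ℝ) ^ j * (η' / 3)) by positivity) S
      have := Real.rpow_pos_of_pos hN0 q
      positivity
    calc ∑ k ∈ s.filter (fun k => f k = j), |Φ x (y k)|
        ≤ (s.filter (fun k => f k = j)).card •
          (A * N ^ q * ((N * ((2:ℝ) ^ j * (η' / 3))) ^ S)⁻¹) :=
          Finset.sum_le_card_nsmul _ _ _ (hterm j)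
      _ = ((s.filter (fun k => f k = j)).card : ℝ) *
          (A * N ^ q * ((N * ((2:ℝ) ^ j * (η' / 3))) ^ S)⁻¹) := by
          rw [nsmul_eq_mul]
      _ ≤ c * ((2:ℝ) ^ (j + 1)) ^ q *
          (A * N ^ q * ((N * ((2:ℝ) ^ j * (η' / 3))) ^ S)⁻¹) :=
          mul_le_mul_of_nonneg_right (hcard j) hB0
      _ = K * r ^ j := hiden j
  calc ∑ j ∈ s.image f, ∑ k ∈ s.filter (fun k => f k = j), |Φ x (y k)|
      ≤ ∑ j ∈ s.image f, K * r ^ j := Finset.sum_le_sum hinner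
    _ = K * ∑ j ∈ s.image f, r ^ j := by rw [Finset.mul_sum]
    _ ≤ K * (1 - r)⁻¹ := by
        apply mul_le_mul_of_nonneg_left ?_ hK0
        have hsum : ∑ j ∈ s.image f, r ^ j ≤ ∑' j : ℕ, r ^ j :=
          Summable.sum_le_tsum _ (fun i _ => pow_nonneg hr0.le i)
            (summable_geometric_of_lt_one hr0.le hr1)
        rw [tsum_geometric_of_lt_one hr0.le hr1] at hsum
        exact hsum
    _ = (3:ℝ) ^ S * (2:ℝ) ^ q * (1 - r)⁻¹ * A * c * N ^ q * (N * η') ^ (-S) := by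
        rw [hK]; ring
end
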